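/- Uniform case: let n bidders have i.i.d. bids uniform on [0,1], and for 0 ≤ k ≤ n let r^k be the reserve vector equal to 1/2 on the first k coordinates and 0 elsewhere. Then the expected eager revenue equals RevE(k) = (n + 2^{−n} − 1)/(n + 1) − (if k < n then 2^{−n}/(n − k + 1) else 0). -/

import Mathlib

open MeasureTheory Finset
open scoped Classical ENNReal

noncomputable def lazyWinner {n : ℕ} (b : Fin (n + 1) → ℝ) : Fin (n + 1) :=
  (Finset.univ.filter fun i => ∀ j, b j ≤ b i).min' (by
    obtain ⟨i, -, hi⟩ := Finset.exists_max_image Finset.univ b ⟨0, Finset.mem_univ 0⟩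
    exact ⟨i, Finset.mem_filter.mpr ⟨Finset.mem_univ i, fun j => hi j (Finset.mem_univ j)⟩⟩)

noncomputable def secondMax {n : ℕ} (b : Fin (n + 1) → ℝ) : ℝ :=
  (Finset.univ.erase (lazyWinner b)).fold max 0 b

/-- Revenue of the second price auction with lazy reserves. -/
noncomputable def lazyRev {n : ℕ} (b r : Fin (n + 1) → ℝ) : ℝ :=
  if r (lazyWinner b) ≤ b (lazyWinner b) then max (r (lazyWinner b)) (secondMax b) else 0

/-- The least-index bidder among those meeting their reserve attaining the highest bid. -/
noncomputable def eagerWinner {n : ℕ} (b r : Fin (n + 1) → ℝ)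
    (hS : (Finset.univ.filter fun i => r i ≤ b i).Nonempty) : Fin (n + 1) :=
  ((Finset.univ.filter fun i => r i ≤ b i).filter
      fun i => ∀ k ∈ Finset.univ.filter (fun i => r i ≤ b i), b k ≤ b i).min' (by
    obtain ⟨i, hi, hmax⟩ := Finset.exists_max_image _ b hS
    exact ⟨i, Finset.mem_filter.mpr ⟨hi, hmax⟩⟩)

/-- Revenue of the second price auction with eager reserves. -/
noncomputable def eagerRev {n : ℕ} (b r : Fin (n + 1) → ℝ) : ℝ :=
  if hS : (Finset.univ.filter fun i => r i ≤ b i).Nonempty then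
    max (r (eagerWinner b r hS))
      (((Finset.univ.filter fun i => r i ≤ b i).erase (eagerWinner b r hS)).fold max 0 b)
  else 0

/-!
By the layer-cake formula the expected revenue is `∫₀¹ P(Rev > t) dt`, bids being in `[0, 1]`.
For `t ≥ 0`, `Rev ≤ t` iff no bidder whose reserve exceeds `t` meets it and at most one bidder
meeting their reserve bids above `t`. With reserve `1/2` for the first `k` bidders and `0` for the
others, for `t < 1/2` this says that the treated bids are below `1/2` and at most one untreated bid
exceeds `t`, while for `t ≥ 1/2` it says that at most one bid exceeds `t`. At most one of `m`
independent uniform bids exceeds `t` with probability `t ^ m + m (1 - t) t ^ (m - 1)`, so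
`P(Rev ≤ t)` is `2⁻ᵏ` times this polynomial for `m = n + 1 - k` below `1/2`, and this polynomial for
`m = n + 1` above; integrating these polynomials gives the formula.
-/

section AtMostOneOutside

variable {ι α : Type*}

def atMostOneOutside (A : Set α) : Set (ι → α) :=
  {b | ∀ i j, i ≠ j → b i ∈ A ∨ b j ∈ A}

theorem atMostOneOutside_eq_union (A : Set α) :
    (atMostOneOutside A : Set (ι → α)) =
      Set.univ.pi (fun _ => A) ∪ ⋃ i, Set.univ.pi (Function.update (fun _ => A) i Aᶜ) := by
  ext b
  simp only [atMostOneOutside, Set.mem_ofPred_eq, Set.mem_union, Set.mem_univ_pi, Set.mem_iUnion]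
  constructor
  · intro h
    by_cases hall : ∀ i, b i ∈ A
    · exact Or.inl hall
    · push Not at hall
      obtain ⟨i, hi⟩ := hall
      refine Or.inr ⟨i, fun j => ?_⟩
      rcases eq_or_ne j i with rfl | hji
      · simpa using hi
      · simpa [hji] using (h j i hji).resolve_right hi
  · rintro (h | ⟨i, h⟩) j l hjl
    · exact Or.inl (h j)
    · rcases eq_or_ne j i with rfl | hj
      · exact Or.inr (by simpa [hjl.symm] using h l)
      · exact Or.inl (by simpa [hj] using h j)

theorem measurableSet_univ_pi_update_compl [Countable ι] [MeasurableSpace α] {A : Set α}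
    (hA : MeasurableSet A) (i : ι) :
    MeasurableSet (Set.univ.pi (Function.update (fun _ => A) i Aᶜ)) := by
  refine MeasurableSet.univ_pi fun j => ?_
  rcases eq_or_ne j i with rfl | hj
  · simpa using hA.compl
  · simpa [hj] using hA

theorem measurableSet_atMostOneOutside [Countable ι] [MeasurableSpace α] {A : Set α}
    (hA : MeasurableSet A) : MeasurableSet (atMostOneOutside A : Set (ι → α)) := by
  rw [atMostOneOutside_eq_union]
  exact (MeasurableSet.univ_pi fun _ => hA).union
    (MeasurableSet.iUnion (measurableSet_univ_pi_update_compl hA))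

theorem measure_pi_atMostOneOutside [Fintype ι] [MeasurableSpace α] (ν : Measure α)
    [SigmaFinite ν] {A : Set α} (hA : MeasurableSet A) :
    Measure.pi (fun _ : ι => ν) (atMostOneOutside A) =
      ν A ^ Fintype.card ι + Fintype.card ι * (ν Aᶜ * ν A ^ (Fintype.card ι - 1)) := by
  set box : ι → Set (ι → α) := fun i => Set.univ.pi (Function.update (fun _ => A) i Aᶜ)
  have hbox_meas : ∀ i, MeasurableSet (box i) := measurableSet_univ_pi_update_compl hA
  have hdisj : Disjoint (Set.univ.pi fun _ => A) (⋃ i, box i) := by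
    refine Set.disjoint_iUnion_right.2 fun i => Set.disjoint_left.2 fun b hA' hbox => ?_
    have := hbox i (Set.mem_univ i)
    simp only [Function.update_self] at this
    exact this (hA' i (Set.mem_univ i))
  have hbox_disj : Pairwise (Function.onFun Disjoint box) := fun i j hij =>
    Set.disjoint_left.2 fun b hi hj => by
      have h1 := hi i (Set.mem_univ i)
      have h2 := hj i (Set.mem_univ i)
      simp only [Function.update_self, Function.update_of_ne hij] at h1 h2
      exact h1 h2
  have hbox_measure : ∀ i, Measure.pi (fun _ : ι => ν) (box i) =
      ν Aᶜ * ν A ^ (Fintype.card ι - 1) := fun i => by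
    rw [Measure.pi_pi, ← Function.comp_def, Function.comp_update,
      Finset.prod_update_of_mem (Finset.mem_univ i)]
    simp only [Function.comp_apply, Finset.prod_const, ← Finset.erase_eq,
      Finset.card_erase_of_mem (Finset.mem_univ i), Finset.card_univ]
  rw [atMostOneOutside_eq_union, measure_union hdisj (MeasurableSet.iUnion hbox_meas),
    measure_iUnion hbox_disj hbox_meas, tsum_fintype,
    Finset.sum_congr rfl fun i _ => hbox_measure i, Finset.sum_const, nsmul_eq_mul,
    Finset.card_univ, Measure.pi_pi, Finset.prod_const, Finset.card_univ]

theorem measureReal_pi_atMostOneOutside [Fintype ι] [MeasurableSpace α] (ν : Measure α)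
    [IsFiniteMeasure ν] {A : Set α} (hA : MeasurableSet A) :
    (Measure.pi fun _ : ι => ν).real (atMostOneOutside A) =
      ν.real A ^ Fintype.card ι +
        Fintype.card ι * (ν.real Aᶜ * ν.real A ^ (Fintype.card ι - 1)) := by
  simp only [measureReal_def, measure_pi_atMostOneOutside ν hA]
  rw [ENNReal.toReal_add (by finiteness) (by finiteness)]
  simp [ENNReal.toReal_mul]

end AtMostOneOutside

theorem ae_pi_restrict_forall_mem {ι α : Type*} [Fintype ι] [MeasurableSpace α]
    (μ : ι → Measure α) [∀ i, SigmaFinite (μ i)] {s : ι → Set α}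
    (hs : ∀ i, MeasurableSet (s i)) :
    ∀ᵐ b ∂Measure.pi fun i => (μ i).restrict (s i), ∀ i, b i ∈ s i := by
  rw [← Measure.restrict_pi_pi]
  filter_upwards [ae_restrict_mem (MeasurableSet.univ_pi hs)] with b hb i
  exact hb i (Set.mem_univ i)

theorem aemeasurable_of_nullMeasurableSet_le {α β : Type*} [MeasurableSpace α] {μ : Measure α}
    [TopologicalSpace β] [MeasurableSpace β] [BorelSpace β] [LinearOrder β] [OrderTopology β]
    [SecondCountableTopology β] {f : α → β} (h : ∀ t, NullMeasurableSet {x | f x ≤ t} μ) : AEMeasurable f μ :=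
  NullMeasurable.aemeasurable (measurable_of_Iic (δ := NullMeasurableSpace α μ) h)

section EagerRev

variable {n : ℕ} {b r : Fin (n + 1) → ℝ}

theorem eagerWinner_spec (hS : (Finset.univ.filter fun i => r i ≤ b i).Nonempty) :
    r (eagerWinner b r hS) ≤ b (eagerWinner b r hS) ∧
      ∀ l, r l ≤ b l → b l ≤ b (eagerWinner b r hS) := by
  have h : eagerWinner b r hS ∈ (Finset.univ.filter fun i => r i ≤ b i).filter
      fun i => ∀ k ∈ Finset.univ.filter (fun i => r i ≤ b i), b k ≤ b i :=
    Finset.min'_mem _ _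
  simp only [Finset.mem_filter, Finset.mem_univ, true_and] at h
  exact ⟨h.1, h.2⟩

theorem reserve_eagerWinner_le_eagerRev
    (hS : (Finset.univ.filter fun i => r i ≤ b i).Nonempty) :
    r (eagerWinner b r hS) ≤ eagerRev b r := by
  rw [eagerRev, dif_pos hS]
  exact le_max_left _ _

theorem le_eagerRev_of_ne_eagerWinner (hS : (Finset.univ.filter fun i => r i ≤ b i).Nonempty)
    {i : Fin (n + 1)} (hi : r i ≤ b i) (hne : i ≠ eagerWinner b r hS) :
    b i ≤ eagerRev b r := by
  rw [eagerRev, dif_pos hS]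
  refine le_max_of_le_right (Finset.le_fold_max _ |>.2 (Or.inr ⟨i, ?_, le_rfl⟩))
  simp [hne, hi]

theorem eagerRev_nonneg : 0 ≤ eagerRev b r := by
  rw [eagerRev]
  split_ifs
  · exact le_max_of_le_right (Finset.le_fold_max _ |>.2 (Or.inl le_rfl))
  · exact le_rfl

theorem eagerRev_le_iff {p : ℝ} (hp : 0 ≤ p) :
    eagerRev b r ≤ p ↔ (∀ i, p < r i → b i < r i) ∧
      ∀ i j, i ≠ j → r i ≤ b i → r j ≤ b j → b i ≤ p ∨ b j ≤ p := by
  constructor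
  · intro hrev
    refine ⟨fun i hpi => lt_of_not_ge fun hi => ?_, fun i j hij hi hj => ?_⟩
    · have hS : (Finset.univ.filter fun i => r i ≤ b i).Nonempty := ⟨i, by simpa using hi⟩
      rcases eq_or_ne i (eagerWinner b r hS) with rfl | hne
      · linarith [reserve_eagerWinner_le_eagerRev hS]
      · linarith [le_eagerRev_of_ne_eagerWinner hS hi hne]
    · have hS : (Finset.univ.filter fun i => r i ≤ b i).Nonempty := ⟨i, by simpa using hi⟩
      by_cases hiw : i = eagerWinner b r hS
      · have hjw : j ≠ eagerWinner b r hS := hiw ▸ hij.symm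
        exact Or.inr (le_eagerRev_of_ne_eagerWinner hS hj hjw |>.trans hrev)
      · exact Or.inl (le_eagerRev_of_ne_eagerWinner hS hi hiw |>.trans hrev)
  · rintro ⟨hres, hsec⟩
    rw [eagerRev]
    split_ifs with hS
    · obtain ⟨hw, hmax⟩ := eagerWinner_spec hS
      refine max_le (le_of_not_gt fun h => (hres _ h).not_ge hw) ?_
      refine (Finset.fold_max_le _).2 ⟨hp, fun i hi => ?_⟩
      simp only [Finset.mem_erase, Finset.mem_filter, Finset.mem_univ, true_and] at hi
      exact (hsec i _ hi.1 hi.2 hw).elim id fun h => (hmax i hi.2).trans h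
    · exact hp

theorem eagerRev_le_of_forall_le {p : ℝ} (hp : 0 ≤ p) (hr : ∀ i, r i ≤ p)
    (hb : ∀ i, b i ≤ p) :
    eagerRev b r ≤ p :=
  (eagerRev_le_iff hp).2 ⟨fun i h => absurd (hr i) h.not_ge, fun i _ _ _ _ => Or.inl (hb i)⟩

end EagerRev

section HalfReserve

noncomputable def halfReserve (n k : ℕ) : Fin (n + 1) → ℝ :=
  fun i => if (i : ℕ) < k then 1 / 2 else 0

variable {n k : ℕ} {b : Fin (n + 1) → ℝ} {t : ℝ}

theorem halfReserve_le_half (i : Fin (n + 1)) : halfReserve n k i ≤ 1 / 2 := by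
  unfold halfReserve
  split_ifs <;> norm_num

theorem eagerRev_halfReserve_le_iff_of_lt_half (hb : ∀ i, 0 ≤ b i) (ht₀ : 0 ≤ t)
    (ht : t < 1 / 2) :
    eagerRev b (halfReserve n k) ≤ t ↔
      (∀ i : {i : Fin (n + 1) // (i : ℕ) < k}, b i < 1 / 2) ∧
        (fun i : {i : Fin (n + 1) // ¬(i : ℕ) < k} => b i) ∈ atMostOneOutside (Set.Iic t) := by
  rw [eagerRev_le_iff ht₀]
  constructor
  · rintro ⟨hres, hsec⟩
    refine ⟨fun i => ?_, fun i j hij => ?_⟩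
    · have h := hres i
      simp only [halfReserve, i.2, if_true] at h
      exact h ht
    · simpa [halfReserve, i.2, j.2, hb] using hsec i j (Subtype.coe_ne_coe.2 hij)
  · rintro ⟨htreated, hsec⟩
    refine ⟨fun i hi => ?_, fun i j hij hi hj => ?_⟩
    · by_cases hik : (i : ℕ) < k
      · simpa [halfReserve, hik] using htreated ⟨i, hik⟩
      · simp only [halfReserve, hik, if_false] at hi
        linarith
    · have untreated : ∀ l, halfReserve n k l ≤ b l → ¬(l : ℕ) < k := fun l hl hlk => by
        simp only [halfReserve, hlk, if_true] at hl
        exact (htreated ⟨l, hlk⟩).not_ge hl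
      exact hsec ⟨i, untreated i hi⟩ ⟨j, untreated j hj⟩ (Subtype.coe_ne_coe.1 hij)

theorem eagerRev_halfReserve_le_iff_of_half_le (ht : 1 / 2 ≤ t) :
    eagerRev b (halfReserve n k) ≤ t ↔ b ∈ atMostOneOutside (Set.Iic t) := by
  have hres : ∀ i, halfReserve n k i ≤ t := fun i => (halfReserve_le_half i).trans ht
  rw [eagerRev_le_iff (by linarith)]
  constructor
  · rintro ⟨-, hsec⟩ i j hij
    by_contra! h
    simp only [Set.mem_Iic, not_le] at h
    exact (hsec i j hij ((hres i).trans h.1.le) ((hres j).trans h.2.le)).elim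
      h.1.not_ge h.2.not_ge
  · exact fun hsec => ⟨fun i h => absurd (hres i) h.not_ge, fun i j hij _ _ => hsec i j hij⟩

end HalfReserve

section SecondHighestCDF

-- The CDF of the second highest of `m` i.i.d. uniform `[0, 1]` variables, i.e. the probability
-- that at most one of them exceeds `t`; `m - 1` truncates only where its coefficient `m` vanishes.
noncomputable def secondHighestCDF (m : ℕ) (t : ℝ) : ℝ := t ^ m + m * (1 - t) * t ^ (m - 1)

theorem continuous_secondHighestCDF (m : ℕ) : Continuous (secondHighestCDF m) := by
  unfold secondHighestCDF
  fun_prop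

theorem hasDerivAt_secondHighestCDF_primitive (m : ℕ) (t : ℝ) :
    HasDerivAt (fun t : ℝ => t ^ m - (m - 1) / (m + 1) * t ^ (m + 1))
      (secondHighestCDF m t) t := by
  refine ((hasDerivAt_pow m t).sub ((hasDerivAt_pow (m + 1) t).const_mul _)).congr_deriv ?_
  rcases m with _ | m
  · simp [secondHighestCDF]
  · simp only [secondHighestCDF, Nat.add_sub_cancel]
    push_cast
    field_simp
    ring

theorem integral_secondHighestCDF (m : ℕ) (a b : ℝ) :
    ∫ t in a..b, secondHighestCDF m t =
      (b ^ m - (m - 1) / (m + 1) * b ^ (m + 1)) - (a ^ m - (m - 1) / (m + 1) * a ^ (m + 1)) :=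
  intervalIntegral.integral_eq_sub_of_hasDerivAt
    (fun t _ => hasDerivAt_secondHighestCDF_primitive m t)
    ((continuous_secondHighestCDF m).intervalIntegrable a b)

theorem integral_one_sub_const_mul_secondHighestCDF (c : ℝ) (m : ℕ) (a b : ℝ) :
    ∫ t in a..b, (1 - c * secondHighestCDF m t) =
      b - a - c * ((b ^ m - (m - 1) / (m + 1) * b ^ (m + 1)) -
        (a ^ m - (m - 1) / (m + 1) * a ^ (m + 1))) := by
  rw [intervalIntegral.integral_sub intervalIntegrable_const
      (((continuous_secondHighestCDF m).intervalIntegrable a b).const_mul c),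
    intervalIntegral.integral_const_mul, integral_secondHighestCDF, intervalIntegral.integral_const,
    smul_eq_mul, mul_one]

theorem revenue_integrals_eq {n k : ℕ} (hk : k ≤ n + 1) :
    (∫ t in (0 : ℝ)..1 / 2, (1 - (1 / 2) ^ k * secondHighestCDF (n + 1 - k) t)) +
        ∫ t in (1 / 2 : ℝ)..1, (1 - secondHighestCDF (n + 1) t) =
      ((n + 1 : ℝ) + (2 : ℝ) ^ (-(n + 1 : ℤ)) - 1) / ((n + 1 : ℝ) + 1) -
        (if k < n + 1 then (2 : ℝ) ^ (-(n + 1 : ℤ)) / ((n + 1 : ℝ) - (k : ℝ) + 1)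
          else 0) := by
  have hhigh := integral_one_sub_const_mul_secondHighestCDF 1 (n + 1) (1 / 2) 1
  simp only [one_mul] at hhigh
  rw [integral_one_sub_const_mul_secondHighestCDF, hhigh]
  have h2 : (2 : ℝ) ^ (-(n + 1 : ℤ)) = (1 / 2) ^ k * (1 / 2) ^ (n + 1 - k) := by
    rw [← pow_add, Nat.add_sub_cancel' hk, one_div, inv_pow, ← zpow_natCast, ← zpow_neg]
    push_cast
    ring_nf
  rw [h2]
  rcases hk.lt_or_eq with hk | rfl
  · obtain ⟨m, rfl⟩ : ∃ m, n = k + m := ⟨n - k, by omega⟩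
    rw [if_pos hk, show k + m + 1 - k = m + 1 by omega]
    push_cast
    simp only [one_pow, zero_pow (Nat.succ_ne_zero _), pow_add, pow_succ]
    generalize (1 / 2 : ℝ) ^ k = p
    generalize (1 / 2 : ℝ) ^ m = q
    have : (k + m + 1 : ℝ) - k + 1 ≠ 0 := by linarith [(m.cast_nonneg : (0 : ℝ) ≤ m)]
    field_simp
    ring
  · rw [if_neg (lt_irrefl _), Nat.sub_self]
    push_cast
    field_simp
    ring

end SecondHighestCDF

section Uniform

local notation "unif" => volume.restrict (Set.Icc (0 : ℝ) 1)

instance : IsProbabilityMeasure unif :=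
  ⟨by simp⟩

theorem uniform_real_Iic {t : ℝ} (ht₀ : 0 ≤ t) (ht₁ : t ≤ 1) :
    (unif).real (Set.Iic t) = t := by
  have h : Set.Iic t ∩ Set.Icc 0 1 = Set.Icc 0 t := by
    ext; simp only [Set.mem_inter_iff, Set.mem_Iic, Set.mem_Icc]; grind
  rw [measureReal_restrict_apply measurableSet_Iic, h, Real.volume_real_Icc_of_le ht₀, sub_zero]

theorem uniform_real_Iio_half : (unif).real (Set.Iio (1 / 2)) = 1 / 2 := by
  have h : Set.Iio (1 / 2) ∩ Set.Icc 0 1 = Set.Ico (0 : ℝ) (1 / 2) := by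
    ext; simp only [Set.mem_inter_iff, Set.mem_Iio, Set.mem_Icc, Set.mem_Ico]; grind
  rw [measureReal_restrict_apply measurableSet_Iio, h, Real.volume_real_Ico_of_le (by norm_num),
    sub_zero]

theorem uniform_pi_real_atMostOneOutside_Iic {ι : Type*} [Fintype ι] {t : ℝ} (ht₀ : 0 ≤ t)
    (ht₁ : t ≤ 1) :
    (Measure.pi fun _ : ι => unif).real (atMostOneOutside (Set.Iic t)) =
      secondHighestCDF (Fintype.card ι) t := by
  have hcompl : (unif).real (Set.Iic t)ᶜ = 1 - t := by
    rw [probReal_compl_eq_one_sub measurableSet_Iic, uniform_real_Iic ht₀ ht₁]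
  rw [measureReal_pi_atMostOneOutside _ measurableSet_Iic, hcompl, uniform_real_Iic ht₀ ht₁,
    secondHighestCDF]
  ring

theorem measurableSet_univ_pi_Iio_prod_atMostOneOutside_Iic {ι κ : Type*} [Countable ι]
    [Countable κ] (c t : ℝ) :
    MeasurableSet (Set.univ.pi (fun _ => Set.Iio c) ×ˢ atMostOneOutside (Set.Iic t) :
      Set ((ι → ℝ) × (κ → ℝ))) :=
  (MeasurableSet.univ_pi fun _ => measurableSet_Iio).prod
    (measurableSet_atMostOneOutside measurableSet_Iic)

variable {n k : ℕ}

local notation "bids" => Measure.pi fun _ : Fin (n + 1) => unif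

local notation "splitTreated" => MeasurableEquiv.piEquivPiSubtypeProd (fun _ : Fin (n + 1) => ℝ)
  fun i : Fin (n + 1) => (i : ℕ) < k

theorem ae_eagerRev_halfReserve_mem_Icc :
    ∀ᵐ b ∂bids, eagerRev b (halfReserve n k) ∈ Set.Icc 0 1 := by
  filter_upwards [ae_pi_restrict_forall_mem _ fun _ => measurableSet_Icc] with b hb
  exact ⟨eagerRev_nonneg, eagerRev_le_of_forall_le zero_le_one
    (fun i => (halfReserve_le_half i).trans (by norm_num)) fun i => (hb i).2⟩

theorem setOf_eagerRev_halfReserve_le_ae_eq {t : ℝ} (ht₀ : 0 ≤ t) (ht : t < 1 / 2) :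
    {b | eagerRev b (halfReserve n k) ≤ t} =ᵐ[bids]
      splitTreated ⁻¹'
        (Set.univ.pi (fun _ => Set.Iio (1 / 2)) ×ˢ atMostOneOutside (Set.Iic t)) := by
  filter_upwards [ae_pi_restrict_forall_mem _ fun _ => measurableSet_Icc] with b hb
  refine propext ?_
  change eagerRev b (halfReserve n k) ≤ t ↔ b ∈ splitTreated ⁻¹' _
  rw [eagerRev_halfReserve_le_iff_of_lt_half (fun i => (hb i).1) ht₀ ht]
  simp only [Set.mem_preimage, Set.mem_univ_pi, Set.mem_Iio]
  rfl

theorem setOf_eagerRev_halfReserve_le_of_half_le {t : ℝ} (ht : 1 / 2 ≤ t) :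
    {b | eagerRev b (halfReserve n k) ≤ t} = atMostOneOutside (Set.Iic t) :=
  Set.ext fun _ => eagerRev_halfReserve_le_iff_of_half_le ht

theorem aemeasurable_eagerRev_halfReserve :
    AEMeasurable (fun b => eagerRev b (halfReserve n k)) bids := by
  refine aemeasurable_of_nullMeasurableSet_le fun t => ?_
  rcases lt_or_ge t 0 with ht₀ | ht₀
  · convert nullMeasurableSet_empty
    exact Set.eq_empty_of_forall_notMem fun b hb => (eagerRev_nonneg.trans hb).not_gt ht₀
  rcases lt_or_ge t (1 / 2) with ht | ht
  · exact ((splitTreated).measurable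
      (measurableSet_univ_pi_Iio_prod_atMostOneOutside_Iic _ _)).nullMeasurableSet.congr
      (setOf_eagerRev_halfReserve_le_ae_eq ht₀ ht).symm
  · rw [setOf_eagerRev_halfReserve_le_of_half_le ht]
    exact (measurableSet_atMostOneOutside measurableSet_Iic).nullMeasurableSet

theorem card_subtype_val_lt (hk : k ≤ n + 1) :
    Fintype.card {i : Fin (n + 1) // (i : ℕ) < k} = k := by
  rw [Fintype.card_subtype, Fin.card_filter_val_lt, min_eq_right hk]

theorem measureReal_lt_eagerRev_halfReserve_of_lt_half (hk : k ≤ n + 1) {t : ℝ}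
    (ht₀ : 0 ≤ t) (ht : t < 1 / 2) :
    (bids).real {b | t < eagerRev b (halfReserve n k)} =
      1 - (1 / 2) ^ k * secondHighestCDF (n + 1 - k) t := by
  have hcompl : {b | t < eagerRev b (halfReserve n k)} =
      {b | eagerRev b (halfReserve n k) ≤ t}ᶜ := by
    ext; simp
  have htreated : (Measure.pi fun _ : {i : Fin (n + 1) // (i : ℕ) < k} => unif).real
      (Set.univ.pi fun _ => Set.Iio (1 / 2)) = (1 / 2) ^ k := by
    rw [measureReal_def, Measure.pi_pi, Finset.prod_const, Finset.card_univ,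
      card_subtype_val_lt hk, ENNReal.toReal_pow, ← measureReal_def, uniform_real_Iio_half]
  have huntreated : (Measure.pi fun _ : {i : Fin (n + 1) // ¬(i : ℕ) < k} => unif).real
      (atMostOneOutside (Set.Iic t)) = secondHighestCDF (n + 1 - k) t := by
    rw [uniform_pi_real_atMostOneOutside_Iic ht₀ (by linarith), Fintype.card_subtype_compl,
      card_subtype_val_lt hk, Fintype.card_fin]
  have hmeas := measurableSet_univ_pi_Iio_prod_atMostOneOutside_Iic
    (ι := {i : Fin (n + 1) // (i : ℕ) < k}) (κ := {i : Fin (n + 1) // ¬(i : ℕ) < k})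
    (1 / 2) t
  rw [hcompl, measureReal_congr (setOf_eagerRev_halfReserve_le_ae_eq ht₀ ht).compl,
    probReal_compl_eq_one_sub ((splitTreated).measurable hmeas),
    (measurePreserving_piEquivPiSubtypeProd (fun _ => unif) _).measureReal_preimage
      hmeas.nullMeasurableSet, measureReal_def, Measure.prod_prod, ENNReal.toReal_mul,
    ← measureReal_def, ← measureReal_def, htreated, huntreated]

theorem measureReal_lt_eagerRev_halfReserve_of_half_le {t : ℝ} (ht : 1 / 2 ≤ t)
    (ht₁ : t ≤ 1) :
    (bids).real {b | t < eagerRev b (halfReserve n k)} = 1 - secondHighestCDF (n + 1) t := by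
  have hcompl : {b | t < eagerRev b (halfReserve n k)} =
      {b | eagerRev b (halfReserve n k) ≤ t}ᶜ := by
    ext; simp
  rw [hcompl, setOf_eagerRev_halfReserve_le_of_half_le ht,
    probReal_compl_eq_one_sub (measurableSet_atMostOneOutside measurableSet_Iic),
    uniform_pi_real_atMostOneOutside_Iic (by linarith) ht₁, Fintype.card_fin]

theorem integrable_eagerRev_halfReserve :
    Integrable (fun b => eagerRev b (halfReserve n k)) bids := by
  refine Integrable.of_bound aemeasurable_eagerRev_halfReserve.aestronglyMeasurable 1 ?_
  filter_upwards [ae_eagerRev_halfReserve_mem_Icc] with b hb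
  rw [Real.norm_of_nonneg hb.1]
  exact hb.2

theorem integral_eagerRev_halfReserve (hk : k ≤ n + 1) :
    ∫ b, eagerRev b (halfReserve n k) ∂bids =
      (∫ t in (0 : ℝ)..1 / 2, (1 - (1 / 2) ^ k * secondHighestCDF (n + 1 - k) t)) +
        ∫ t in (1 / 2 : ℝ)..1, (1 - secondHighestCDF (n + 1) t) := by
  set tail : ℝ → ℝ := fun t => (bids).real {b | t < eagerRev b (halfReserve n k)}
  have htail_anti : Antitone tail := fun s t hst =>
    measureReal_mono fun b (hb : t < _) => (hst.trans_lt hb : s < _)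
  have htail_zero : ∀ t, 1 < t → tail t = 0 := fun t ht => by
    refine (measureReal_eq_zero_iff).2 (measure_eq_zero_iff_ae_notMem.2 ?_)
    filter_upwards [ae_eagerRev_halfReserve_mem_Icc] with b hb
    simpa using (hb.2.trans ht.le)
  rw [integrable_eagerRev_halfReserve.integral_eq_integral_meas_lt
      (by filter_upwards [ae_eagerRev_halfReserve_mem_Icc] with b hb using hb.1),
    setIntegral_eq_of_subset_of_ae_sdiff_eq_zero measurableSet_Ioi.nullMeasurableSet
      Set.Ioc_subset_Ioi_self (Filter.Eventually.of_forall fun t ht =>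
        htail_zero t (lt_of_not_ge fun h => ht.2 ⟨ht.1, h⟩)),
    ← intervalIntegral.integral_of_le zero_le_one,
    ← intervalIntegral.integral_add_adjacent_intervals htail_anti.intervalIntegrable
      htail_anti.intervalIntegrable]
  congr 1
  · refine intervalIntegral.integral_congr_ae ?_
    filter_upwards [volume.ae_ne (1 / 2)] with t hne ht
    rw [Set.uIoc_of_le (by norm_num)] at ht
    exact measureReal_lt_eagerRev_halfReserve_of_lt_half hk ht.1.le (lt_of_le_of_ne ht.2 hne)
  · refine intervalIntegral.integral_congr fun t ht => ?_
    rw [Set.uIcc_of_le (by norm_num)] at ht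
    exact measureReal_lt_eagerRev_halfReserve_of_half_le ht.1 ht.2

end Uniform

theorem eager_ab_testing_uniform {n : ℕ} (k : ℕ) (hk : k ≤ n + 1) :
    ∫⁻ b, ENNReal.ofReal (eagerRev b fun i => if (i : ℕ) < k then (1/2 : ℝ) else 0)
        ∂(Measure.pi fun _ : Fin (n + 1) => volume.restrict (Set.Icc (0:ℝ) 1)) =
      ENNReal.ofReal
        (((n + 1 : ℝ) + (2:ℝ) ^ (-(n + 1 : ℤ)) - 1) / ((n + 1 : ℝ) + 1) -
          (if k < n + 1 then (2:ℝ) ^ (-(n + 1 : ℤ)) / ((n + 1 : ℝ) - (k : ℝ) + 1) else 0)) := by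
  change ∫⁻ b, ENNReal.ofReal (eagerRev b (halfReserve n k)) ∂_ = _
  rw [← ofReal_integral_eq_lintegral_ofReal integrable_eagerRev_halfReserve
      (ae_eagerRev_halfReserve_mem_Icc.mono fun _ hb => hb.1),
    integral_eagerRev_halfReserve hk, revenue_integrals_eq hk]
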